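/- Fix a probability distribution μ supported on the non-negative integers with |μ|_1 < 1 and with Σ_{c≥0} e^{tc}·μ(c) = ∞ for all t > 0. For n ∈ ℕ, let T_n be a Bienaymé tree with offspring distribution μ conditioned to have size n, and let n_{T_n} be the degree statistics of T_n. Then for any C > 0, with very high probability |n_{T_n}|_2² ≥ C·|n_{T_n}|_1. -/

import Mathlib

open scoped ENNReal NNReal BigOperators
open MeasureTheory ProbabilityTheory

/-- A plane tree: a finite rooted tree with ordered children. -/
inductive PlaneTree : Type where
  | node : List PlaneTree → PlaneTree

namespace PlaneTree

/-- The list of root subtrees of a plane tree. -/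
def children : PlaneTree → List PlaneTree
  | node l => l

/-- The number of vertices of a plane tree. -/
def size : PlaneTree → ℕ
  | node l => 1 + (l.attach.map fun c => size c.1).sum
decreasing_by
  simp only [node.sizeOf_spec]
  have := List.sizeOf_lt_of_mem c.2
  omega

/-- The height of a plane tree: the maximal graph distance from the root to a vertex. -/
def height : PlaneTree → ℕ
  | node l => (l.attach.map fun c => height c.1 + 1).foldr max 0
decreasing_by
  simp only [node.sizeOf_spec]
  have := List.sizeOf_lt_of_mem c.2
  omega

/-- The number of vertices of a plane tree at distance `k` from the root. -/
def levelCount : PlaneTree → ℕ → ℕ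
  | _, 0 => 1
  | node l, k + 1 => (l.attach.map fun c => levelCount c.1 k).sum
termination_by t _ => sizeOf t
decreasing_by
  simp only [node.sizeOf_spec]
  have := List.sizeOf_lt_of_mem c.2
  omega

/-- The width of a plane tree: the maximal number of vertices on a single level. -/
def width (t : PlaneTree) : ℕ :=
  (Finset.range (t.height + 1)).sup t.levelCount

/-- The number of vertices of a plane tree having exactly `c` children. -/
def degCount : PlaneTree → ℕ → ℕ
  | node l, c => (if l.length = c then 1 else 0) + (l.attach.map fun s => degCount s.1 c).sum
termination_by t _ => sizeOf t
decreasing_by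
  simp only [node.sizeOf_spec]
  have := List.sizeOf_lt_of_mem s.2
  omega

/-- The sum over all vertices `v` of `(deg v)^2`, i.e. `|n_t|_2^2`. -/
def sumDegSq : PlaneTree → ℕ
  | node l => l.length ^ 2 + (l.attach.map fun c => sumDegSq c.1).sum
decreasing_by
  simp only [node.sizeOf_spec]
  have := List.sizeOf_lt_of_mem c.2
  omega

/-- The subtree of a plane tree rooted at the vertex reached by following the path `p`
(at each step, `i` means "move to the `i`-th child"), if that vertex exists. -/
def subtreeAt : List ℕ → PlaneTree → Option PlaneTree
  | [], t => some t
  | i :: p, node l => l[i]?.bind (subtreeAt p)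

/-- `v : List ℕ` encodes a vertex of the plane tree `t` (the root is `[]`, and the height of
a vertex is the length of its path). -/
def IsVertex (t : PlaneTree) (v : List ℕ) : Prop :=
  subtreeAt v t ≠ none

/-- The number of children of the vertex `v` of `t` (junk value `0` if `v` is not a vertex). -/
def degAt (t : PlaneTree) (v : List ℕ) : ℕ :=
  match subtreeAt v t with
  | some s => s.children.length
  | none => 0

end PlaneTree

/-- `n` is the degree statistics sequence of some plane tree: `Σ_c n(c) = 1 + Σ_c c·n(c)`. -/
def IsDegStats (n : ℕ →₀ ℕ) : Prop :=
  n.sum (fun _ m => m) = 1 + n.sum (fun c m => c * m)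

/-- `|n|_1 = Σ_c c·n(c)`. -/
def dsNorm1 (n : ℕ →₀ ℕ) : ℕ := n.sum fun c m => c * m

/-- `|n|_2² = Σ_c c²·n(c)`. -/
def dsNorm2Sq (n : ℕ →₀ ℕ) : ℕ := n.sum fun c m => c ^ 2 * m

/-- The set `𝒯_n^•` of marked plane trees `(t,v)` with degree statistics `n`. -/
def markedTrees (n : ℕ →₀ ℕ) : Set (PlaneTree × List ℕ) :=
  {tv | (∀ c, tv.1.degCount c = n c) ∧ tv.1.IsVertex tv.2}


/-- The weight of a plane tree with respect to a weight sequence `w`: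
`w(t) = ∏_{v ∈ t} w(deg_t(v))`. -/
noncomputable def treeWeight (w : ℕ → ℝ) : PlaneTree → ℝ
  | .node l => w l.length * (l.attach.map fun c => treeWeight w c.1).prod
decreasing_by
  simp only [PlaneTree.node.sizeOf_spec]
  have := List.sizeOf_lt_of_mem c.2
  omega

/-- The partition function `Z_n(w) = Σ_{plane trees t with n vertices} w(t)`. -/
noncomputable def Zn (w : ℕ → ℝ) (n : ℕ) : ℝ :=
  ∑' t : {t : PlaneTree // t.size = n}, treeWeight w t

/-- The probability that the simply generated tree of size `n` with weight sequence `w`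
(for offspring distributions `w`, the Bienaymé tree conditioned to have `n` vertices)
belongs to the set `E`. -/
noncomputable def sgProb (w : ℕ → ℝ) (n : ℕ) (E : Set PlaneTree) : ℝ :=
  (∑' t : {t : PlaneTree // t.size = n ∧ t ∈ E}, treeWeight w t) / Zn w n

/-- The expectation of `f` applied to the simply generated tree of size `n` with weight
sequence `w`. -/
noncomputable def sgExp (w : ℕ → ℝ) (n : ℕ) (f : PlaneTree → ℝ) : ℝ :=
  (∑' t : {t : PlaneTree // t.size = n}, treeWeight w t * f t) / Zn w n

/-- The probability that `(T_n, V_n) ∈ E`, where `T_n` is the simply generated tree of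
size `n` with weight sequence `w` and, given `T_n`, `V_n` is a uniformly random
vertex of `T_n` (a tree with `n` vertices has exactly `n` vertex paths). -/
noncomputable def sgMarkedProb (w : ℕ → ℝ) (n : ℕ) (E : Set (PlaneTree × List ℕ)) : ℝ :=
  (∑' tv : {tv : PlaneTree × List ℕ //
      tv.1.size = n ∧ tv.1.IsVertex tv.2 ∧ tv ∈ E}, treeWeight w (tv : _).1.1) /
    (n * Zn w n)

/-- The expectation of `f (T_n, V_n)`, where `T_n` is the simply generated tree of size `n`
with weight sequence `w` and, given `T_n`, `V_n` is a uniformly random vertex of `T_n`. -/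
noncomputable def sgMarkedExp (w : ℕ → ℝ) (n : ℕ) (f : PlaneTree × List ℕ → ℝ) : ℝ :=
  (∑' tv : {tv : PlaneTree × List ℕ // tv.1.size = n ∧ tv.1.IsVertex tv.2},
      treeWeight w (tv : _).1.1 * f tv) / (n * Zn w n)

/-
Replacing `μ(k)` by `e^{σk - τk²} μ(k)` multiplies the weight of a tree `t` by
`e^{σ(|t|-1) - τ|n_t|₂²}`, so the trees of size `n` with `|n_t|₂² < C(|t|-1)` weigh at most
`e^{-(σ-τC)(n-1)}` times the total tilted weight. The total weight of all trees is at most any `Y`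
with `φ(Y) ≤ Y`, where `φ` is the generating function of the weights; for `τ = σ/(2C)` and small
`σ`, subcriticality provides such a `Y = e^ρ`. So the numerator of `P(T_n ∈ ·)` is `O(e^{-σn/2})`.

It remains to see that `Z_n = P(|T| = n)` decays subexponentially. For `y > 1` the total weight
`T` of the weights `y μ(k)` would solve `T = y Σ μ(k) T^k`, which has no finite solution: the
right side is infinite for `T > 1` by the hypothesis on the moment generating function, and it
exceeds `T` for `T ≤ 1` because the mean is `< 1`. Hence `Σ y^n Z_n = ∞`, and `Z_n ≥ e^{-δn}` for
infinitely many `n`. Grafting a tree on the leftmost leaf of another gives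
`Z_{x+1} Z_{y+1} ≤ μ(0) Z_{x+y+1}`; as the `x` with `Z_{x+1} > 0` form an additive semigroup,
which contains all large multiples of its gcd, this spreads the bound to all large `n`.
-/

open Filter Topology

namespace PlaneTree

@[elab_as_elim]
theorem ind {motive : PlaneTree → Prop}
    (node : ∀ l : List PlaneTree, (∀ c ∈ l, motive c) → motive (.node l)) : ∀ t, motive t
  | .node l => node l fun c _ => ind node c
decreasing_by
  simp only [PlaneTree.node.sizeOf_spec]
  have := List.sizeOf_lt_of_mem ‹c ∈ l›
  omega

theorem size_node (l : List PlaneTree) : (node l).size = 1 + (l.map size).sum := by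
  rw [size, List.attach_map_val]

theorem sumDegSq_node (l : List PlaneTree) :
    (node l).sumDegSq = l.length ^ 2 + (l.map sumDegSq).sum := by
  rw [sumDegSq, List.attach_map_val]

theorem size_pos (t : PlaneTree) : 0 < t.size := by
  cases t with | node l => rw [size_node]; omega

theorem size_lt_size_node {l : List PlaneTree} {c : PlaneTree} (hc : c ∈ l) :
    c.size < (node l).size := by
  have := List.le_sum_of_mem (List.mem_map_of_mem (f := size) hc)
  rw [size_node]
  omega

end PlaneTree

open PlaneTree

theorem treeWeight_node (w : ℕ → ℝ) (l : List PlaneTree) :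
    treeWeight w (.node l) = w l.length * (l.map (treeWeight w)).prod := by
  rw [treeWeight, List.attach_map_val]

theorem treeWeight_nonneg {w : ℕ → ℝ} (hw : ∀ k, 0 ≤ w k) (t : PlaneTree) :
    0 ≤ treeWeight w t := by
  induction t using PlaneTree.ind with
  | node l ih =>
    rw [treeWeight_node]
    exact mul_nonneg (hw _) (List.prod_nonneg (by simpa using ih))

theorem treeWeight_exp (σ τ : ℝ) (t : PlaneTree) :
    treeWeight (fun k => Real.exp (σ * k - τ * k ^ 2)) t =
      Real.exp (σ * (t.size - 1) - τ * t.sumDegSq) := by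
  induction t using PlaneTree.ind with
  | node l ih =>
    set F : PlaneTree → ℝ := fun c => σ * (c.size - 1) - τ * c.sumDegSq
    have hprod : (l.map fun c => Real.exp (F c)).prod = Real.exp (l.map F).sum := by
      rw [Real.exp_list_sum, List.map_map]; rfl
    rw [treeWeight_node, List.map_congr_left ih, hprod, ← Real.exp_add, size_node, sumDegSq_node]
    have hsum : ∀ l' : List PlaneTree, (l'.map F).sum =
        σ * (((l'.map size).sum : ℕ) - l'.length) - τ * ((l'.map sumDegSq).sum : ℕ) := by
      intro l'
      induction l' with
      | nil => simp
      | cons c cs ihl =>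
        simp only [List.map_cons, List.sum_cons, List.length_cons, ihl, F]; push_cast; ring
    rw [hsum]
    push_cast
    ring_nf

theorem Zn_nonneg {w : ℕ → ℝ} (hw : ∀ k, 0 ≤ w k) (n : ℕ) : 0 ≤ Zn w n :=
  tsum_nonneg fun t => treeWeight_nonneg hw t

-- An `ℝ≥0∞`-valued `treeWeight`, so that sums over all trees need no summability hypotheses.
noncomputable def ennTreeWeight (w : ℕ → ℝ≥0∞) : PlaneTree → ℝ≥0∞
  | .node l => w l.length * (l.attach.map fun c => ennTreeWeight w c.1).prod
decreasing_by
  simp only [PlaneTree.node.sizeOf_spec]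
  have := List.sizeOf_lt_of_mem c.2
  omega

theorem ennTreeWeight_node (w : ℕ → ℝ≥0∞) (l : List PlaneTree) :
    ennTreeWeight w (.node l) = w l.length * (l.map (ennTreeWeight w)).prod := by
  rw [ennTreeWeight, List.attach_map_val]

theorem ofReal_treeWeight {w : ℕ → ℝ} (hw : ∀ k, 0 ≤ w k) (t : PlaneTree) :
    ENNReal.ofReal (treeWeight w t) = ennTreeWeight (ENNReal.ofReal ∘ w) t := by
  induction t using PlaneTree.ind with
  | node l ih =>
    rw [treeWeight_node, ennTreeWeight_node, ENNReal.ofReal_mul (hw _)]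
    congr 1
    induction l with
    | nil => simp
    | cons c cs ihl =>
      simp only [List.map_cons, List.prod_cons, List.forall_mem_cons] at ih ⊢
      rw [ENNReal.ofReal_mul (treeWeight_nonneg hw c), ih.1, ihl ih.2]

theorem tsum_treeWeight_eq_toReal {w : ℕ → ℝ} (hw : ∀ k, 0 ≤ w k) (p : PlaneTree → Prop) :
    ∑' t : {t // p t}, treeWeight w t =
      (∑' t : {t // p t}, ennTreeWeight (ENNReal.ofReal ∘ w) t).toReal := by
  simp only [← ofReal_treeWeight hw]
  rw [ENNReal.tsum_toReal_eq fun _ => ENNReal.ofReal_ne_top]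
  exact tsum_congr fun t => (ENNReal.toReal_ofReal (treeWeight_nonneg hw t)).symm

theorem ennTreeWeight_mul (u w : ℕ → ℝ≥0∞) (t : PlaneTree) :
    ennTreeWeight (fun k => u k * w k) t = ennTreeWeight u t * ennTreeWeight w t := by
  induction t using PlaneTree.ind with
  | node l ih =>
    rw [ennTreeWeight_node, ennTreeWeight_node, ennTreeWeight_node, List.map_congr_left ih,
      List.prod_map_mul]
    ring

theorem ennTreeWeight_const (c : ℝ≥0∞) (t : PlaneTree) :
    ennTreeWeight (fun _ => c) t = c ^ t.size := by
  induction t using PlaneTree.ind with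
  | node l ih =>
    rw [ennTreeWeight_node, size_node, List.map_congr_left ih, pow_add, pow_one]
    congr 1
    induction l with
    | nil => simp
    | cons c cs ihl =>
      simp only [List.map_cons, List.prod_cons, List.sum_cons, List.forall_mem_cons] at ih ⊢
      rw [ihl ih.2, pow_add]

noncomputable def expTilt (σ τ : ℝ) (μ : ℕ → ℝ) (k : ℕ) : ℝ :=
  Real.exp (σ * k - τ * k ^ 2) * μ k

theorem ennTreeWeight_expTilt (μ : ℕ → ℝ) (σ τ : ℝ) (t : PlaneTree) :
    ennTreeWeight (ENNReal.ofReal ∘ expTilt σ τ μ) t =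
      ENNReal.ofReal (Real.exp (σ * (t.size - 1) - τ * t.sumDegSq)) *
        ennTreeWeight (ENNReal.ofReal ∘ μ) t := by
  have hsplit : ENNReal.ofReal ∘ expTilt σ τ μ = fun k =>
      (ENNReal.ofReal ∘ fun k : ℕ => Real.exp (σ * k - τ * k ^ 2)) k * (ENNReal.ofReal ∘ μ) k :=
    funext fun k => ENNReal.ofReal_mul (Real.exp_nonneg _)
  rw [hsplit, ennTreeWeight_mul, ← ofReal_treeWeight fun _ => Real.exp_nonneg _, treeWeight_exp]

theorem ofReal_expTilt_mul_pow (σ τ ρ : ℝ) (μ : ℕ → ℝ) (k : ℕ) :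
    ENNReal.ofReal (expTilt σ τ μ k) * ENNReal.ofReal (Real.exp ρ) ^ k =
      ENNReal.ofReal (expTilt (σ + ρ) τ μ k) := by
  rw [← ENNReal.ofReal_pow (Real.exp_nonneg _), ← ENNReal.ofReal_mul' (by positivity),
    expTilt, expTilt, ← Real.exp_nat_mul, mul_right_comm, ← Real.exp_add]
  ring_nf

theorem ENNReal.tsum_fin_prod {α : Type*} (g : α → ℝ≥0∞) (k : ℕ) :
    ∑' f : Fin k → α, ∏ i, g (f i) = (∑' a, g a) ^ k := by
  induction k with
  | zero => simp
  | succ k ih =>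
    rw [← (Fin.consEquiv fun _ => α).tsum_eq, ENNReal.tsum_prod', pow_succ', ← ih,
      ← ENNReal.tsum_mul_right]
    refine tsum_congr fun a => ?_
    simp [Fin.consEquiv, Fin.prod_univ_succ, ENNReal.tsum_mul_left]

theorem tsum_list_prod {α : Type*} (w : ℕ → ℝ≥0∞) (g : α → ℝ≥0∞) :
    ∑' l : List α, w l.length * (l.map g).prod = ∑' k, w k * (∑' a, g a) ^ k := by
  rw [← List.equivSigmaTuple.symm.tsum_eq, ENNReal.tsum_sigma']
  refine tsum_congr fun k => ?_
  simp only [List.equivSigmaTuple, Equiv.coe_fn_symm_mk, List.length_ofFn, List.map_ofFn,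
    List.prod_ofFn, ENNReal.tsum_mul_left, Function.comp_apply]
  rw [ENNReal.tsum_fin_prod]

theorem tsum_eq_tsum_node (f : PlaneTree → ℝ≥0∞) : ∑' t, f t = ∑' l, f (.node l) :=
  (Equiv.tsum_eq ⟨PlaneTree.node, children, fun _ => rfl, fun t => by cases t; rfl⟩ _).symm

theorem tsum_ennTreeWeight_eq (w : ℕ → ℝ≥0∞) :
    ∑' t, ennTreeWeight w t = ∑' k, w k * (∑' t, ennTreeWeight w t) ^ k := by
  conv_lhs => rw [tsum_eq_tsum_node]
  simp only [ennTreeWeight_node, tsum_list_prod]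

theorem tsum_ennTreeWeight_of_size_le_le {w : ℕ → ℝ≥0∞} {Y : ℝ≥0∞}
    (hY : ∑' k, w k * Y ^ k ≤ Y) (m : ℕ) :
    ∑' t, (if t.size ≤ m then ennTreeWeight w t else 0) ≤ Y := by
  induction m with
  | zero => simp [(size_pos _).ne']
  | succ m ih =>
    calc ∑' t, (if t.size ≤ m + 1 then ennTreeWeight w t else 0)
        ≤ ∑' l : List PlaneTree, w l.length *
            (l.map fun c => if c.size ≤ m then ennTreeWeight w c else 0).prod := by
          rw [tsum_eq_tsum_node]
          refine ENNReal.tsum_le_tsum fun l => ?_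
          split_ifs with hl
          · rw [ennTreeWeight_node, List.map_congr_left fun c hc =>
              if_pos (by have := size_lt_size_node hc; omega)]
          · exact zero_le
      _ = ∑' k, w k * (∑' t, if t.size ≤ m then ennTreeWeight w t else 0) ^ k :=
          tsum_list_prod _ _
      _ ≤ ∑' k, w k * Y ^ k := by gcongr
      _ ≤ Y := hY

theorem tsum_ennTreeWeight_le {w : ℕ → ℝ≥0∞} {Y : ℝ≥0∞} (hY : ∑' k, w k * Y ^ k ≤ Y) :
    ∑' t, ennTreeWeight w t ≤ Y := by
  rw [ENNReal.tsum_eq_iSup_sum]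
  refine iSup_le fun s => ?_
  calc ∑ t ∈ s, ennTreeWeight w t
      = ∑ t ∈ s, if t.size ≤ s.sup size then ennTreeWeight w t else 0 :=
        Finset.sum_congr rfl fun t ht => (if_pos (Finset.le_sup ht)).symm
    _ ≤ _ := ENNReal.sum_le_tsum s
    _ ≤ Y := tsum_ennTreeWeight_of_size_le_le hY _

noncomputable def ennZn (w : ℕ → ℝ≥0∞) (n : ℕ) : ℝ≥0∞ :=
  ∑' t : {t : PlaneTree // t.size = n}, ennTreeWeight w t

theorem Zn_eq_toReal_ennZn {w : ℕ → ℝ} (hw : ∀ k, 0 ≤ w k) (n : ℕ) :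
    Zn w n = (ennZn (ENNReal.ofReal ∘ w) n).toReal :=
  tsum_treeWeight_eq_toReal hw _

theorem tsum_ennTreeWeight_eq_tsum_ennZn (w : ℕ → ℝ≥0∞) :
    ∑' t, ennTreeWeight w t = ∑' n, ennZn w n := by
  rw [← (Equiv.sigmaFiberEquiv size).tsum_eq, ENNReal.tsum_sigma']
  rfl

theorem ennZn_le_tsum (w : ℕ → ℝ≥0∞) (n : ℕ) : ennZn w n ≤ ∑' t, ennTreeWeight w t :=
  ENNReal.tsum_comp_le_tsum_of_injective Subtype.val_injective _

theorem tsum_ennTreeWeight_const_mul (c : ℝ≥0∞) (w : ℕ → ℝ≥0∞) :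
    ∑' t, ennTreeWeight (fun k => c * w k) t = ∑' n, c ^ n * ennZn w n := by
  rw [tsum_ennTreeWeight_eq_tsum_ennZn]
  refine tsum_congr fun n => ?_
  rw [ennZn, ennZn, ← ENNReal.tsum_mul_left]
  refine tsum_congr fun t => ?_
  rw [ennTreeWeight_mul (fun _ => c), ennTreeWeight_const, t.2]

def graft : PlaneTree → PlaneTree → PlaneTree
  | .node [], t' => t'
  | .node (c :: cs), t' => .node (graft c t' :: cs)

theorem size_graft (t t' : PlaneTree) : (graft t t').size + 1 = t.size + t'.size := by
  induction t using PlaneTree.ind with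
  | node l ih =>
    cases l with
    | nil => simp only [graft, size_node, List.map_nil, List.sum_nil]; omega
    | cons c cs =>
      have := ih c List.mem_cons_self
      simp only [graft, size_node, List.map_cons, List.sum_cons]
      omega

theorem ennTreeWeight_graft (w : ℕ → ℝ≥0∞) (t t' : PlaneTree) :
    w 0 * ennTreeWeight w (graft t t') = ennTreeWeight w t * ennTreeWeight w t' := by
  induction t using PlaneTree.ind with
  | node l ih =>
    cases l with
    | nil => simp [graft, ennTreeWeight_node, mul_comm]
    | cons c cs =>
      simp only [graft, ennTreeWeight_node, List.map_cons, List.prod_cons, List.length_cons]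
      rw [mul_left_comm, ← mul_assoc (w 0), ih c List.mem_cons_self]
      ring

theorem graft_injective {t₁ t₂ t₁' t₂' : PlaneTree} (hsize : t₁.size = t₂.size)
    (h : graft t₁ t₁' = graft t₂ t₂') : t₁ = t₂ ∧ t₁' = t₂' := by
  induction t₁ using PlaneTree.ind generalizing t₂ with
  | node l₁ ih =>
    obtain ⟨l₂⟩ := t₂
    cases l₁ <;> cases l₂
    case nil.nil => exact ⟨rfl, h⟩
    case nil.cons c₂ cs₂ =>
      have := size_pos c₂
      simp only [size_node, List.map_nil, List.map_cons, List.sum_nil, List.sum_cons] at hsize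
      omega
    case cons.nil c₁ cs₁ =>
      have := size_pos c₁
      simp only [size_node, List.map_nil, List.map_cons, List.sum_nil, List.sum_cons] at hsize
      omega
    case cons.cons c₁ cs₁ c₂ cs₂ =>
      simp only [graft, node.injEq, List.cons.injEq] at h
      obtain ⟨hc, rfl⟩ := h
      simp only [size_node, List.map_cons, List.sum_cons] at hsize
      obtain ⟨rfl, rfl⟩ := ih c₁ List.mem_cons_self (by omega) hc
      exact ⟨rfl, rfl⟩

theorem ennZn_mul_le (w : ℕ → ℝ≥0∞) (x y : ℕ) :
    ennZn w (x + 1) * ennZn w (y + 1) ≤ w 0 * ennZn w (x + y + 1) := by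
  let G : {t : PlaneTree // t.size = x + 1} × {t : PlaneTree // t.size = y + 1} →
      {t : PlaneTree // t.size = x + y + 1} := fun p =>
    ⟨graft p.1 p.2, by have := size_graft p.1 p.2; rw [p.1.2, p.2.2] at this; omega⟩
  have hG : Function.Injective G := fun p q hpq => by
    obtain ⟨h₁, h₂⟩ := graft_injective (p.1.2.trans q.1.2.symm) (congrArg Subtype.val hpq)
    exact Prod.ext (Subtype.ext h₁) (Subtype.ext h₂)
  calc ennZn w (x + 1) * ennZn w (y + 1)
      = ∑' p : {t : PlaneTree // t.size = x + 1} × {t : PlaneTree // t.size = y + 1},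
          ennTreeWeight w p.1 * ennTreeWeight w p.2 := by
        rw [ennZn, ennZn, ENNReal.tsum_prod', ← ENNReal.tsum_mul_right]
        simp only [ENNReal.tsum_mul_left]
    _ = w 0 * ∑' p, ennTreeWeight w (G p) := by
        rw [← ENNReal.tsum_mul_left]
        exact tsum_congr fun p => (ennTreeWeight_graft w p.1 p.2).symm
    _ ≤ w 0 * ennZn w (x + y + 1) := by
        gcongr
        exact ENNReal.tsum_comp_le_tsum_of_injective hG fun t => ennTreeWeight w t

theorem Nat.exists_forall_ge_mem_of_add_mem {P : Set ℕ} (hP : ∀ x ∈ P, ∀ y ∈ P, x + y ∈ P) :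
    ∃ R, ∀ m ≥ R, Nat.setGcd P ∣ m → m ∈ P := by
  have hclosure : ∀ m ∈ AddSubmonoid.closure P, m = 0 ∨ m ∈ P := fun m hm =>
    AddSubmonoid.closure_induction (fun x hx => Or.inr hx) (Or.inl rfl)
      (fun x y _ _ hx hy => by
        rcases hx with rfl | hx <;> rcases hy with rfl | hy <;> simp_all) hm
  obtain ⟨R, hR⟩ := Nat.exists_mem_closure_of_ge P
  exact ⟨R + 1, fun m hm hdvd => (hclosure m (hR m (by omega) hdvd)).resolve_left (by omega)⟩

theorem exists_pos_forall_lt_le (f : ℕ → ℝ) (N : ℕ) : ∃ c > 0, ∀ s < N, 0 < f s → c ≤ f s := by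
  set S := (Finset.range N).filter fun s => 0 < f s
  have hmem : ∀ s < N, 0 < f s → s ∈ S := fun s hs hfs =>
    Finset.mem_filter.2 ⟨Finset.mem_range.2 hs, hfs⟩
  rcases S.eq_empty_or_nonempty with hS | hS
  · exact ⟨1, one_pos, fun s hs hfs => absurd (hmem s hs hfs) (hS ▸ Finset.notMem_empty s)⟩
  · obtain ⟨s₀, hs₀, hmin⟩ := S.exists_min_image f hS
    exact ⟨f s₀, (Finset.mem_filter.1 hs₀).2, fun s hs hfs => hmin s (hmem s hs hfs)⟩

theorem pow_mul_le_of_supermul {f : ℕ → ℝ} (hf : ∀ x, 0 ≤ f x)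
    (hmul : ∀ x y, f x * f y ≤ f (x + y)) (x s q : ℕ) : f x ^ q * f s ≤ f (q * x + s) := by
  induction q with
  | zero => simp
  | succ q ih =>
    calc f x ^ (q + 1) * f s = f x * (f x ^ q * f s) := by ring
      _ ≤ f x * f (q * x + s) := mul_le_mul_of_nonneg_left ih (hf x)
      _ ≤ f (x + (q * x + s)) := hmul _ _
      _ = f ((q + 1) * x + s) := by congr 1; ring

theorem eventually_exp_le_of_supermul {f : ℕ → ℝ} (hf : ∀ x, 0 ≤ f x)
    (hmul : ∀ x y, f x * f y ≤ f (x + y))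
    (hfreq : ∀ ε > 0, ∃ᶠ x : ℕ in atTop, Real.exp (-ε * x) ≤ f x) {δ : ℝ} (hδ : 0 < δ) :
    ∀ᶠ x : ℕ in atTop, 0 < f x → Real.exp (-δ * x) ≤ f x := by
  obtain ⟨R, hR⟩ := Nat.exists_forall_ge_mem_of_add_mem (P := {x | 0 < f x})
    fun x hx y hy => (mul_pos hx hy).trans_le (hmul x y)
  obtain ⟨x₀, hx₀, hfx₀⟩ := (hfreq (δ / 2) (by positivity)).forall_exists_of_atTop 1
  have hx₀P : 0 < f x₀ := (Real.exp_pos _).trans_le hfx₀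
  obtain ⟨c, hc, hcle⟩ := exists_pos_forall_lt_le f (R + x₀)
  have hsmall : ∀ᶠ x : ℕ in atTop, Real.exp (-(δ / 2) * x) ≤ c :=
    (Real.tendsto_exp_atBot.comp ((tendsto_natCast_atTop_atTop).const_mul_atTop_of_neg
      (by linarith))).eventually (eventually_le_nhds hc)
  filter_upwards [eventually_ge_atTop (R + x₀), hsmall] with x hx hxc hfx
  -- `x = q x₀ + s` with `R ≤ s < R + x₀`, and `0 < f s` as the gcd of `{x | 0 < f x}` divides `s`
  have hxqs : x = (x - R) / x₀ * x₀ + (R + (x - R) % x₀) := by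
    have := Nat.div_add_mod' (x - R) x₀
    omega
  have hslt : R + (x - R) % x₀ < R + x₀ := by
    have := Nat.mod_lt (x - R) (show 0 < x₀ by omega)
    omega
  set q := (x - R) / x₀
  set s := R + (x - R) % x₀
  have hs : 0 < f s := by
    refine hR s (by omega) ?_
    have hgx : Nat.setGcd {x | 0 < f x} ∣ x := Nat.setGcd_dvd_of_mem hfx
    have hgx₀ : Nat.setGcd {x | 0 < f x} ∣ q * x₀ := (Nat.setGcd_dvd_of_mem hx₀P).mul_left q
    rwa [hxqs, Nat.dvd_add_right hgx₀] at hgx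
  have hqx : (q * x₀ : ℝ) ≤ x := by exact_mod_cast (show q * x₀ ≤ x by omega)
  calc Real.exp (-δ * x) = Real.exp (-(δ / 2) * x) * Real.exp (-(δ / 2) * x) := by
        rw [← Real.exp_add]; ring_nf
    _ ≤ Real.exp (-(δ / 2) * x₀) ^ q * c := by
        rw [← Real.exp_nat_mul]
        exact mul_le_mul (Real.exp_le_exp.2 (by nlinarith)) hxc (Real.exp_pos _).le (by positivity)
    _ ≤ f x₀ ^ q * f s := by gcongr; exact hcle s hslt hs
    _ ≤ f x := hxqs ▸ pow_mul_le_of_supermul hf hmul x₀ s q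

theorem Real.exp_sub_mul_sq_le {a τ x : ℝ} (ha : 0 ≤ a) (hτ : 0 < τ) (hx : 0 ≤ x) :
    Real.exp (a * x - τ * x ^ 2) ≤ 1 + a * x * Real.exp (a ^ 2 / (4 * τ)) := by
  set y := a * x - τ * x ^ 2
  have hy_max : y ≤ a ^ 2 / (4 * τ) := by
    rw [le_div_iff₀ (by positivity)]
    nlinarith [sq_nonneg (a - 2 * τ * x)]
  rcases le_or_gt y 0 with hy | hy
  · have : 0 ≤ a * x * Real.exp (a ^ 2 / (4 * τ)) := by positivity
    linarith [Real.exp_le_one_iff.2 hy]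
  · have h₁ : Real.exp y ≤ 1 + y * Real.exp y := by
      have := mul_le_mul_of_nonneg_left (Real.one_sub_le_exp_neg y) (Real.exp_pos y).le
      rw [← Real.exp_add, add_neg_cancel, Real.exp_zero] at this
      linarith
    have h₂ : y * Real.exp y ≤ a * x * Real.exp (a ^ 2 / (4 * τ)) :=
      mul_le_mul (by nlinarith) (Real.exp_le_exp.2 hy_max) (Real.exp_pos y).le (by positivity)
    linarith

theorem exists_tilt_params {C r : ℝ} (hC : 0 < C) (hr : r < 1) :
    ∃ σ > 0, ∃ ρ ≥ 0, (σ + ρ) * Real.exp ((σ + ρ) ^ 2 / (4 * (σ / (2 * C)))) * r ≤ ρ := by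
  -- with `ρ = K σ` the inequality reads `g σ ≤ K`, and `g 0 = (1 + K) r < K`
  have h1r : 0 < 1 - r := by linarith
  set K := 1 / (1 - r)
  have hK : 0 < K := by positivity
  have hKr : (1 + K) * r < K := by
    simp only [K]
    rw [← sub_pos]
    field_simp
    nlinarith
  set g : ℝ → ℝ := fun σ => (1 + K) * r * Real.exp ((1 + K) ^ 2 * C * σ / 2)
  have hg : ∀ᶠ σ in 𝓝[>] 0, g σ < K := by
    have hcont : ContinuousAt g 0 := by fun_prop
    exact nhdsWithin_le_nhds (hcont.eventually (gt_mem_nhds (by simpa [g] using hKr)))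
  obtain ⟨σ, hσK, hσ : 0 < σ⟩ := (hg.and self_mem_nhdsWithin).exists
  refine ⟨σ, hσ, K * σ, by positivity, ?_⟩
  have hσ0 : σ ≠ 0 := hσ.ne'
  have hexp : (σ + K * σ) ^ 2 / (4 * (σ / (2 * C))) = (1 + K) ^ 2 * C * σ / 2 := by
    field_simp
    ring
  calc (σ + K * σ) * Real.exp ((σ + K * σ) ^ 2 / (4 * (σ / (2 * C)))) * r = σ * g σ := by
        rw [hexp]; ring
    _ ≤ K * σ := by rw [mul_comm K]; exact mul_le_mul_of_nonneg_left hσK.le hσ.le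

theorem tsum_ennTreeWeight_sumDegSq_lt_le (μ : ℕ → ℝ) {σ τ : ℝ} (hτ : 0 ≤ τ) (C : ℝ) (n : ℕ) :
    ∑' t : {t : PlaneTree // t.size = n ∧
        t ∈ {t : PlaneTree | (t.sumDegSq : ℝ) < C * ((t.size : ℝ) - 1)}},
      ennTreeWeight (ENNReal.ofReal ∘ μ) t ≤
      ENNReal.ofReal (Real.exp (-(σ - τ * C) * (n - 1))) *
        ∑' t, ennTreeWeight (ENNReal.ofReal ∘ expTilt σ τ μ) t := by
  rw [← ENNReal.tsum_mul_left]
  refine le_trans (ENNReal.tsum_le_tsum fun t => ?_)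
    (ENNReal.tsum_comp_le_tsum_of_injective Subtype.val_injective
      fun t => ENNReal.ofReal (Real.exp (-(σ - τ * C) * (n - 1))) *
        ennTreeWeight (ENNReal.ofReal ∘ expTilt σ τ μ) t)
  obtain ⟨t, rfl, hlt⟩ := t
  rw [ennTreeWeight_expTilt, ← mul_assoc, ← ENNReal.ofReal_mul (Real.exp_nonneg _), ← Real.exp_add]
  refine le_mul_of_one_le_left zero_le (ENNReal.one_le_ofReal.2 (Real.one_le_exp ?_))
  nlinarith [mul_le_mul_of_nonneg_left (le_of_lt hlt) hτ]

structure IsSubcritical (μ : ℕ → ℝ) : Prop where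
  nonneg : ∀ k, 0 ≤ μ k
  tsum_eq_one : ∑' k, μ k = 1
  summable_mean : Summable fun k : ℕ => (k : ℝ) * μ k
  mean_lt_one : ∑' k : ℕ, (k : ℝ) * μ k < 1

theorem isSubcritical_of_ennReal_mean_lt_one {μ : ℕ → ℝ} (hpos : ∀ k, 0 ≤ μ k)
    (hprob : ∑' k, μ k = 1) (hmean : ∑' k : ℕ, (k : ℝ≥0∞) * ENNReal.ofReal (μ k) < 1) :
    IsSubcritical μ := by
  have hterm : ∀ k : ℕ, (k : ℝ≥0∞) * ENNReal.ofReal (μ k) = ENNReal.ofReal (k * μ k) := fun k => by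
    rw [ENNReal.ofReal_mul (Nat.cast_nonneg k), ENNReal.ofReal_natCast]
  simp only [hterm] at hmean
  have hsum : Summable fun k : ℕ => (k : ℝ) * μ k := by
    simpa [ENNReal.toReal_ofReal, mul_nonneg, hpos] using ENNReal.summable_toReal hmean.ne_top
  refine ⟨hpos, hprob, hsum, ?_⟩
  rwa [← ENNReal.ofReal_tsum_of_nonneg (fun k => mul_nonneg k.cast_nonneg (hpos k)) hsum,
    ENNReal.ofReal_lt_one] at hmean

namespace IsSubcritical

variable {μ : ℕ → ℝ}

theorem summable (hμ : IsSubcritical μ) : Summable μ := by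
  by_contra h
  simpa [tsum_eq_zero_of_not_summable h] using hμ.tsum_eq_one

theorem mean_nonneg (hμ : IsSubcritical μ) : 0 ≤ ∑' k : ℕ, (k : ℝ) * μ k :=
  tsum_nonneg fun k => mul_nonneg k.cast_nonneg (hμ.nonneg k)

theorem summable_mul_pow (hμ : IsSubcritical μ) {s : ℝ} (hs₀ : 0 ≤ s) (hs₁ : s ≤ 1) :
    Summable fun k => μ k * s ^ k :=
  hμ.summable.of_nonneg_of_le (fun k => mul_nonneg (hμ.nonneg k) (pow_nonneg hs₀ k))
    fun k => mul_le_of_le_one_right (hμ.nonneg k) (pow_le_one₀ hs₀ hs₁)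

theorem one_sub_mul_mean_le_tsum_mul_pow (hμ : IsSubcritical μ) {s : ℝ} (hs₀ : 0 ≤ s)
    (hs₁ : s ≤ 1) : 1 - (1 - s) * ∑' k : ℕ, (k : ℝ) * μ k ≤ ∑' k, μ k * s ^ k := by
  have hbernoulli : ∀ k : ℕ, μ k - (1 - s) * (k * μ k) ≤ μ k * s ^ k := fun k => by
    have := one_add_mul_le_pow (a := s - 1) (by linarith) k
    rw [add_sub_cancel] at this
    nlinarith [hμ.nonneg k]
  have := (hμ.summable.sub (hμ.summable_mean.mul_left (1 - s))).tsum_le_tsum hbernoulli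
    (hμ.summable_mul_pow hs₀ hs₁)
  rwa [Summable.tsum_sub hμ.summable (hμ.summable_mean.mul_left _), tsum_mul_left,
    hμ.tsum_eq_one] at this

theorem tsum_ennTreeWeight_le_one (hμ : IsSubcritical μ) :
    ∑' t, ennTreeWeight (ENNReal.ofReal ∘ μ) t ≤ 1 :=
  tsum_ennTreeWeight_le (by
    simp [← ENNReal.ofReal_tsum_of_nonneg hμ.nonneg hμ.summable, hμ.tsum_eq_one])

theorem ennZn_eq_ofReal_Zn (hμ : IsSubcritical μ) (n : ℕ) :
    ennZn (ENNReal.ofReal ∘ μ) n = ENNReal.ofReal (Zn μ n) := by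
  rw [Zn_eq_toReal_ennZn hμ.nonneg, ENNReal.ofReal_toReal]
  exact ne_top_of_le_ne_top ENNReal.one_ne_top
    ((ennZn_le_tsum _ n).trans hμ.tsum_ennTreeWeight_le_one)

theorem Zn_mul_le (hμ : IsSubcritical μ) (x y : ℕ) :
    Zn μ (x + 1) * Zn μ (y + 1) ≤ μ 0 * Zn μ (x + y + 1) := by
  have := ennZn_mul_le (ENNReal.ofReal ∘ μ) x y
  rwa [hμ.ennZn_eq_ofReal_Zn, hμ.ennZn_eq_ofReal_Zn, hμ.ennZn_eq_ofReal_Zn, Function.comp_apply,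
    ← ENNReal.ofReal_mul (Zn_nonneg hμ.nonneg _), ← ENNReal.ofReal_mul (hμ.nonneg 0),
    ENNReal.ofReal_le_ofReal_iff (mul_nonneg (hμ.nonneg 0) (Zn_nonneg hμ.nonneg _))] at this

theorem tsum_ennTreeWeight_const_mul_eq_top (hμ : IsSubcritical μ)
    (hmgf : ∀ s : ℝ, 0 < s → ∑' k : ℕ, ENNReal.ofReal (Real.exp (s * k) * μ k) = ⊤)
    {y : ℝ} (hy : 1 < y) :
    ∑' t, ennTreeWeight (fun k => ENNReal.ofReal y * (ENNReal.ofReal ∘ μ) k) t = ⊤ := by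
  have hfixT := tsum_ennTreeWeight_eq fun k => ENNReal.ofReal y * (ENNReal.ofReal ∘ μ) k
  set T := ∑' t, ennTreeWeight (fun k => ENNReal.ofReal y * (ENNReal.ofReal ∘ μ) k) t
  by_contra hT
  set s := T.toReal
  have hs₀ : 0 ≤ s := ENNReal.toReal_nonneg
  have hfix : ENNReal.ofReal s = ENNReal.ofReal y * ∑' k, ENNReal.ofReal (μ k * s ^ k) := by
    rw [ENNReal.ofReal_toReal hT, ← ENNReal.tsum_mul_left]
    conv_lhs => rw [hfixT]
    refine tsum_congr fun k => ?_
    rw [ENNReal.ofReal_mul (hμ.nonneg k), ENNReal.ofReal_pow hs₀, ENNReal.ofReal_toReal hT,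
      Function.comp_apply, mul_assoc]
  rcases le_or_gt s 1 with hs₁ | hs₁
  · -- `s = y Σ μ(k) s^k ≥ y (1 - (1 - s) m)` with mean `m < 1` is impossible for `s ≤ 1 < y`
    rw [← ENNReal.ofReal_tsum_of_nonneg (fun k => mul_nonneg (hμ.nonneg k) (pow_nonneg hs₀ k))
      (hμ.summable_mul_pow hs₀ hs₁), ← ENNReal.ofReal_mul (by linarith),
      ENNReal.ofReal_eq_ofReal_iff hs₀ (mul_nonneg (by linarith)
        (tsum_nonneg fun k => mul_nonneg (hμ.nonneg k) (pow_nonneg hs₀ k)))] at hfix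
    have hφ := hμ.one_sub_mul_mean_le_tsum_mul_pow hs₀ hs₁
    have hm₀ := hμ.mean_nonneg
    have hm₁ := hμ.mean_lt_one
    nlinarith [mul_le_mul_of_nonneg_left hφ (by linarith : (0 : ℝ) ≤ y),
      mul_pos (sub_pos.2 hm₁) (by linarith : 0 < y - s),
      mul_nonneg (mul_nonneg hm₀ hs₀) (by linarith : (0 : ℝ) ≤ y - 1)]
  · have hmgf_s := hmgf (Real.log s) (Real.log_pos hs₁)
    simp only [mul_comm (Real.log s), Real.exp_nat_mul, Real.exp_log (by linarith : 0 < s),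
      mul_comm _ (μ _)] at hmgf_s
    rw [hmgf_s, ENNReal.mul_top (ENNReal.ofReal_pos.2 (by linarith)).ne'] at hfix
    exact ENNReal.ofReal_ne_top hfix

theorem frequently_exp_le_Zn (hμ : IsSubcritical μ)
    (hmgf : ∀ s : ℝ, 0 < s → ∑' k : ℕ, ENNReal.ofReal (Real.exp (s * k) * μ k) = ⊤)
    {δ : ℝ} (hδ : 0 < δ) : ∃ᶠ n : ℕ in atTop, Real.exp (-δ * n) ≤ Zn μ n := by
  intro hsmall
  have htop := hμ.tsum_ennTreeWeight_const_mul_eq_top hmgf (Real.one_lt_exp_iff.2 (half_pos hδ))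
  rw [tsum_ennTreeWeight_const_mul] at htop
  simp only [hμ.ennZn_eq_ofReal_Zn, ← ENNReal.ofReal_pow (Real.exp_nonneg _),
    ← ENNReal.ofReal_mul (pow_nonneg (Real.exp_nonneg _) _)] at htop
  have hsum : Summable fun n : ℕ => Real.exp (δ / 2) ^ n * Zn μ n := by
    refine .of_norm_bounded_eventually_nat (summable_geometric_of_lt_one (Real.exp_nonneg _)
      (Real.exp_lt_one_iff.2 (by linarith : -(δ / 2) < 0))) (hsmall.mono fun n hn => ?_)
    rw [Real.norm_of_nonneg (mul_nonneg (pow_nonneg (Real.exp_nonneg _) _)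
      (Zn_nonneg hμ.nonneg n)), ← Real.exp_nat_mul, ← Real.exp_nat_mul]
    calc Real.exp (n * (δ / 2)) * Zn μ n ≤ Real.exp (n * (δ / 2)) * Real.exp (-δ * n) := by
          gcongr; exact (not_le.1 hn).le
      _ = Real.exp (n * -(δ / 2)) := by rw [← Real.exp_add]; ring_nf
  rw [← ENNReal.ofReal_tsum_of_nonneg (fun n => mul_nonneg (pow_nonneg (Real.exp_nonneg _) _)
    (Zn_nonneg hμ.nonneg n)) hsum] at htop
  exact ENNReal.ofReal_ne_top htop

theorem eventually_exp_le_Zn (hμ : IsSubcritical μ)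
    (hmgf : ∀ s : ℝ, 0 < s → ∑' k : ℕ, ENNReal.ofReal (Real.exp (s * k) * μ k) = ⊤)
    {δ : ℝ} (hδ : 0 < δ) : ∀ᶠ n : ℕ in atTop, 0 < Zn μ n → Real.exp (-δ * n) ≤ Zn μ n := by
  have hμ₀ : μ 0 ≤ 1 := hμ.tsum_eq_one ▸ hμ.summable.le_tsum 0 fun k _ => hμ.nonneg k
  have hfreq : ∀ ε > 0, ∃ᶠ x : ℕ in atTop, Real.exp (-ε * x) ≤ Zn μ (x + 1) := by
    intro ε hε
    refine frequently_atTop.2 fun a => ?_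
    obtain ⟨n, hn, hZ⟩ := frequently_atTop.1 (hμ.frequently_exp_le_Zn hmgf (half_pos hε)) (a + 2)
    refine ⟨n - 1, by omega,
      le_trans (Real.exp_le_exp.2 ?_) (by rwa [Nat.sub_add_cancel (by omega)])⟩
    have : (2 : ℝ) ≤ n := by exact_mod_cast (by omega : 2 ≤ n)
    rw [Nat.cast_sub (by omega)]
    push_cast
    nlinarith
  have hsupermul : ∀ x y, Zn μ (x + 1) * Zn μ (y + 1) ≤ Zn μ (x + y + 1) := fun x y =>
    (hμ.Zn_mul_le x y).trans (mul_le_of_le_one_left (Zn_nonneg hμ.nonneg _) hμ₀)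
  obtain ⟨N, hN⟩ := eventually_atTop.1 (eventually_exp_le_of_supermul
    (fun x => Zn_nonneg hμ.nonneg (x + 1)) hsupermul hfreq hδ)
  refine eventually_atTop.2 ⟨N + 1, fun n hn hZ => ?_⟩
  obtain ⟨x, rfl⟩ : ∃ x, n = x + 1 := ⟨n - 1, by omega⟩
  refine le_trans (Real.exp_le_exp.2 ?_) (hN x (by omega) hZ)
  push_cast
  nlinarith

theorem tsum_ofReal_expTilt_le (hμ : IsSubcritical μ) {a τ : ℝ} (ha : 0 ≤ a) (hτ : 0 < τ) :
    ∑' k, ENNReal.ofReal (expTilt a τ μ k) ≤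
      ENNReal.ofReal (1 + a * Real.exp (a ^ 2 / (4 * τ)) * ∑' k : ℕ, (k : ℝ) * μ k) := by
  have hle : ∀ k : ℕ, expTilt a τ μ k ≤ μ k + a * Real.exp (a ^ 2 / (4 * τ)) * (k * μ k) :=
    fun k => by
      have := mul_le_mul_of_nonneg_right
        (Real.exp_sub_mul_sq_le ha hτ (Nat.cast_nonneg k)) (hμ.nonneg k)
      rw [expTilt]
      linarith
  have hnonneg : ∀ k, 0 ≤ expTilt a τ μ k := fun k =>
    mul_nonneg (Real.exp_nonneg _) (hμ.nonneg k)
  have hsum := hμ.summable.add (hμ.summable_mean.mul_left (a * Real.exp (a ^ 2 / (4 * τ))))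
  have hsum' := hsum.of_nonneg_of_le hnonneg hle
  rw [← ENNReal.ofReal_tsum_of_nonneg hnonneg hsum']
  refine ENNReal.ofReal_le_ofReal ((hsum'.tsum_le_tsum hle hsum).trans_eq ?_)
  rw [Summable.tsum_add hμ.summable (hμ.summable_mean.mul_left _), tsum_mul_left, hμ.tsum_eq_one]

theorem exists_tsum_treeWeight_sumDegSq_lt_le (hμ : IsSubcritical μ) {C : ℝ} (hC : 0 < C) :
    ∃ σ > 0, ∃ A : ℝ, ∀ n : ℕ,
      ∑' t : {t : PlaneTree // t.size = n ∧
          t ∈ {t : PlaneTree | (t.sumDegSq : ℝ) < C * ((t.size : ℝ) - 1)}}, treeWeight μ t ≤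
        A * Real.exp (-σ * n) := by
  obtain ⟨σ, hσ, ρ, hρ, hparams⟩ := exists_tilt_params hC hμ.mean_lt_one
  set τ := σ / (2 * C)
  have hτ : 0 < τ := by positivity
  have hgen : ∑' k, ENNReal.ofReal (expTilt σ τ μ k) * ENNReal.ofReal (Real.exp ρ) ^ k ≤
      ENNReal.ofReal (Real.exp ρ) := by
    simp only [ofReal_expTilt_mul_pow]
    refine (hμ.tsum_ofReal_expTilt_le (by positivity) hτ).trans (ENNReal.ofReal_le_ofReal ?_)
    linarith [Real.add_one_le_exp ρ]
  have htotal := tsum_ennTreeWeight_le (w := ENNReal.ofReal ∘ expTilt σ τ μ) hgen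
  refine ⟨σ / 2, half_pos hσ, Real.exp (σ / 2 + ρ), fun n => ?_⟩
  rw [tsum_treeWeight_eq_toReal hμ.nonneg]
  have hbound := (tsum_ennTreeWeight_sumDegSq_lt_le μ hτ.le C n).trans (mul_le_mul_right htotal _)
  refine (ENNReal.toReal_mono (ENNReal.mul_ne_top ENNReal.ofReal_ne_top ENNReal.ofReal_ne_top)
    hbound).trans_eq ?_
  rw [ENNReal.toReal_mul, ENNReal.toReal_ofReal (Real.exp_nonneg _),
    ENNReal.toReal_ofReal (Real.exp_nonneg _), ← Real.exp_add, ← Real.exp_add]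
  congr 1
  simp only [τ]
  field_simp
  ring

end IsSubcritical

/-- **Proposition (degree statistics, zero radius case).** For a subcritical offspring
distribution `μ` whose moment generating function is everywhere infinite, for any `C > 0`,
with very high probability `|n_{T_n}|_2² ≥ C |n_{T_n}|_1`. -/
theorem bienayme_subcritical_heavy_tail_degree_stats (μ : ℕ → ℝ) (hpos : ∀ k, 0 ≤ μ k)
    (hprob : ∑' k, μ k = 1)
    (hmom1 : ∑' k : ℕ, (k : ℝ≥0∞) * ENNReal.ofReal (μ k) < 1)
    (hmgf : ∀ s : ℝ, 0 < s → ∑' k : ℕ, ENNReal.ofReal (Real.exp (s * k) * μ k) = ⊤) :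
    ∀ C : ℝ, 0 < C → ∃ c : ℝ, 0 < c ∧ ∃ N : ℕ, ∀ n ≥ N, 0 < Zn μ n →
      sgProb μ n {t : PlaneTree | (t.sumDegSq : ℝ) < C * ((t.size : ℝ) - 1)} ≤
        Real.exp (-c * n) := by
  intro C hC
  have hμ := isSubcritical_of_ennReal_mean_lt_one hpos hprob hmom1
  obtain ⟨σ, hσ, A, htail⟩ := hμ.exists_tsum_treeWeight_sumDegSq_lt_le hC
  have hA : ∀ᶠ n : ℕ in atTop, A ≤ Real.exp (σ / 4 * n) :=
    (Real.tendsto_exp_atTop.comp (tendsto_natCast_atTop_atTop.const_mul_atTop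
      (by positivity))).eventually_ge_atTop A
  obtain ⟨N, hN⟩ := eventually_atTop.1
    ((hμ.eventually_exp_le_Zn hmgf (by positivity : 0 < σ / 4)).and hA)
  refine ⟨σ / 2, half_pos hσ, N, fun n hn hZ => ?_⟩
  obtain ⟨hlow, hAn⟩ := hN n hn
  rw [sgProb, div_le_iff₀ hZ]
  calc _ ≤ A * Real.exp (-σ * n) := htail n
    _ ≤ Real.exp (σ / 4 * n) * Real.exp (-σ * n) := by gcongr
    _ = Real.exp (-(σ / 2) * n) * Real.exp (-(σ / 4) * n) := by
        rw [← Real.exp_add, ← Real.exp_add]; ring_nf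
    _ ≤ Real.exp (-(σ / 2) * n) * Zn μ n := by gcongr; exact hlow hZ
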